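/- arXiv:2102.09520 — 3 statements merged into one kernel-verified Lean document; each statement's English description precedes it below -/
import Mathlib

section
/- Let $P \in \mathrm{Mat}_n(\mathbb{C}[z])$ with $\det P \ne 0$, so that $P$ is invertible over the formal Laurent series field $\mathbb{C}((z))$. Let $A \in \mathrm{Mat}_n(\mathbb{C}((z)))$ and suppose that $A_+ := P^{-1} A P - P^{-1} P'$ lies in $\mathrm{Mat}_n(\mathbb{C}[[z]])$. Then there exists a formal solution $\Psi \in \mathrm{Mat}_n(\mathbb{C}((z)))$ of $\Psi' = A \Psi$ that factors as $\Psi = P H$ with $H \in \mathrm{GL}_n(\mathbb{C}[[z]])$; in particular, the singularity of the system at $z = 0$ is apparent. -/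
/-!
Substituting `Ψ = P H` turns `Ψ' = A Ψ` into `H' = A₊ H`, a system with power-series coefficients.
Such a system has a power-series solution with `H(0) = 1`, obtained by solving for its
coefficients recursively; its determinant has constant term `1`, so `H ∈ GLₙ(ℂ[[z]])`.
-/

open Polynomial

/-- Formal derivative of a formal Laurent series, `(Df).coeff n = (n+1)·f.coeff (n+1)`. -/
noncomputable def lderiv (f : LaurentSeries ℂ) : LaurentSeries ℂ where
  coeff n := ((n + 1 : ℤ) : ℂ) * f.coeff (n + 1)
  isPWO_support' := by
    have himg : ((fun x : ℤ => x - 1) '' Function.support f.coeff).IsPWO :=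
      f.isPWO_support'.image_of_monotone (fun a b hab => by simpa using hab)
    refine himg.mono ?_
    intro m hm
    have hf : f.coeff (m + 1) ≠ 0 := by
      intro h0
      apply hm
      simp [h0]
    exact ⟨m + 1, hf, by ring⟩

/-- The natural ring homomorphism `ℂ[z] →+* ℂ((z))`. -/
noncomputable def polyToLaurent : ℂ[X] →+* LaurentSeries ℂ :=
  (HahnSeries.ofPowerSeries ℤ ℂ).comp Polynomial.coeToPowerSeries.ringHom
open scoped PowerSeries

lemma lderiv_ofPowerSeries (f : ℂ⟦X⟧) :
    lderiv (HahnSeries.ofPowerSeries ℤ ℂ f) = HahnSeries.ofPowerSeries ℤ ℂ (d⁄dX ℂ f) := by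
  ext n
  change ((n + 1 : ℤ) : ℂ) * _ = _
  rw [PowerSeries.coeff_coe, PowerSeries.coeff_coe]
  rcases n with m | (_ | m)
  · rw [Int.ofNat_eq_natCast, if_neg (by omega), if_neg (by omega),
      PowerSeries.coeff_derivative, mul_comm]
    push_cast
    rfl
  · simp
  · simp [Int.negSucc_lt_zero]
    omega

theorem Matrix.map_mul_derivation {R A l m n : Type*} [CommSemiring R] [CommSemiring A]
    [Algebra R A] [Fintype m] (D : Derivation R A A) (M : Matrix l m A) (N : Matrix m n A) :
    (M * N).map D = M.map D * N + M * N.map D := by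
  ext i j
  simp [Matrix.mul_apply, Finset.sum_add_distrib, mul_comm, add_comm]

namespace PowerSeries

variable {R ι : Type*}

theorem matrix_ext {m n : Type*} [Semiring R] {M N : Matrix m n R⟦X⟧}
    (h : ∀ k, M.map (coeff k) = N.map (coeff k)) : M = N :=
  Matrix.ext fun i j => ext fun k => congrFun (congrFun (h k) i) j

open Finset.HasAntidiagonal in
theorem map_coeff_matrix_mul {l m n : Type*} [CommSemiring R] [Fintype m]
    (M : Matrix l m R⟦X⟧) (N : Matrix m n R⟦X⟧) (k : ℕ) :
    (M * N).map (coeff k) =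
      ∑ p ∈ antidiagonal k, M.map (coeff p.1) * N.map (coeff p.2) := by
  ext i j
  simp only [Matrix.map_apply, Matrix.mul_apply, Matrix.sum_apply, map_sum, coeff_mul]
  exact Finset.sum_comm

variable {K : Type*} [Field K] [Fintype ι] [DecidableEq ι] (B : Matrix ι ι K⟦X⟧)

/-- Coefficients of the solution of `H' = B H`, `H(0) = 1`: comparing coefficients of `z ^ k`
gives `(k + 1) H_{k+1} = ∑_{i ≤ k} B_i H_{k-i}`. -/
noncomputable def fundamentalSolutionCoeff : ℕ → Matrix ι ι K
  | 0 => 1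
  | k + 1 => ((k + 1 : ℕ) : K)⁻¹ •
      ∑ i ∈ Finset.range (k + 1), B.map (coeff i) * fundamentalSolutionCoeff (k - i)
  decreasing_by omega

noncomputable def fundamentalSolution : Matrix ι ι K⟦X⟧ :=
  Matrix.of fun i j => mk fun k => fundamentalSolutionCoeff B k i j

theorem map_coeff_fundamentalSolution (k : ℕ) :
    (fundamentalSolution B).map (coeff k) = fundamentalSolutionCoeff B k := by
  ext i j
  simp [fundamentalSolution]

theorem fundamentalSolution_derivative [CharZero K] :
    (fundamentalSolution B).map (d⁄dX K) = B * fundamentalSolution B := by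
  refine matrix_ext fun k => ?_
  have hk : ((k + 1 : ℕ) : K) ≠ 0 := Nat.cast_ne_zero.mpr k.succ_ne_zero
  calc ((fundamentalSolution B).map (d⁄dX K)).map (coeff k)
      = ((k + 1 : ℕ) : K) • fundamentalSolutionCoeff B (k + 1) := by
        rw [← map_coeff_fundamentalSolution]
        ext i j
        simp [coeff_derivative, mul_comm]
    _ = ∑ i ∈ Finset.range (k + 1), B.map (coeff i) * fundamentalSolutionCoeff B (k - i) := by
        rw [fundamentalSolutionCoeff, smul_smul, mul_inv_cancel₀ hk, one_smul]
    _ = (B * fundamentalSolution B).map (coeff k) := by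
        simp only [map_coeff_matrix_mul, map_coeff_fundamentalSolution,
          Finset.Nat.sum_antidiagonal_eq_sum_range_succ_mk]

theorem isUnit_fundamentalSolution : IsUnit (fundamentalSolution B) := by
  rw [Matrix.isUnit_iff_isUnit_det, isUnit_iff_constantCoeff, RingHom.map_det]
  have h : (fundamentalSolution B).map constantCoeff = 1 := by
    simpa [fundamentalSolutionCoeff] using map_coeff_fundamentalSolution B 0
  simp [h]

end PowerSeries

lemma lderiv_map_ofPowerSeries {m n : Type*} (M : Matrix m n ℂ⟦X⟧) :
    (M.map (HahnSeries.ofPowerSeries ℤ ℂ)).map lderiv =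
      (M.map (d⁄dX ℂ)).map (HahnSeries.ofPowerSeries ℤ ℂ) := by
  simp only [Matrix.map_map, Function.comp_def, lderiv_ofPowerSeries]

lemma polyToLaurent_derivative (q : ℂ[X]) :
    polyToLaurent (derivative q) = HahnSeries.ofPowerSeries ℤ ℂ (d⁄dX ℂ q) := by
  rw [PowerSeries.derivative_coe]
  rfl

lemma polyToLaurent_injective : Function.Injective polyToLaurent :=
  Polynomial.algebraMap_hahnSeries_injective ℤ

lemma isUnit_det_map_polyToLaurent {n : Type*} [Fintype n] [DecidableEq n]
    {P : Matrix n n ℂ[X]} (hP : P.det ≠ 0) : IsUnit (P.map polyToLaurent).det := by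
  rw [← RingHom.mapMatrix_apply, ← RingHom.map_det, isUnit_iff_ne_zero]
  exact (map_ne_zero_iff _ polyToLaurent_injective).mpr hP

theorem Matrix.mul_inv_conj_sub_inv_mul {n L : Type*} [Fintype n] [DecidableEq n] [CommRing L]
    {P : Matrix n n L} (hP : IsUnit P.det) (A D : Matrix n n L) :
    P * (P⁻¹ * A * P - P⁻¹ * D) = A * P - D := by
  rw [mul_sub, ← mul_assoc, ← mul_assoc, ← mul_assoc, mul_nonsing_inv _ hP, one_mul, one_mul]

/-- If `A₊ := P⁻¹AP − P⁻¹P'` has entries in `ℂ[[z]]`, then the system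
`Ψ' = AΨ` has a formal solution `Ψ = P·H` with `H ∈ GLₙ(ℂ[[z]])`:
the singularity at `z = 0` is apparent. -/
theorem apparent_singularity {n : ℕ}
    (P : Matrix (Fin n) (Fin n) ℂ[X]) (hP : P.det ≠ 0)
    (A : Matrix (Fin n) (Fin n) (LaurentSeries ℂ))
    (hA : ∃ B : Matrix (Fin n) (Fin n) (PowerSeries ℂ),
      B.map (HahnSeries.ofPowerSeries ℤ ℂ) =
        (P.map polyToLaurent)⁻¹ * A * (P.map polyToLaurent)
          - (P.map polyToLaurent)⁻¹
            * (P.map fun q => polyToLaurent (Polynomial.derivative q))) :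
    ∃ H : Matrix (Fin n) (Fin n) (PowerSeries ℂ), IsUnit H ∧
      ((P.map polyToLaurent) * (H.map (HahnSeries.ofPowerSeries ℤ ℂ))).map lderiv
        = A * ((P.map polyToLaurent) * (H.map (HahnSeries.ofPowerSeries ℤ ℂ))) := by
  obtain ⟨B, hB⟩ := hA
  set φ := HahnSeries.ofPowerSeries ℤ ℂ
  set H := PowerSeries.fundamentalSolution B
  let Q := P.map Polynomial.coeToPowerSeries.ringHom
  have hPQ : P.map polyToLaurent = Q.map φ := rfl
  have hP'Q : P.map (fun q => polyToLaurent (derivative q)) = (Q.map (d⁄dX ℂ)).map φ := by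
    simp only [Q, Matrix.map_map, Function.comp_def, polyToLaurent_derivative]
    rfl
  refine ⟨H, PowerSeries.isUnit_fundamentalSolution B, ?_⟩
  calc (P.map polyToLaurent * H.map φ).map lderiv
      = ((Q * H).map (d⁄dX ℂ)).map φ := by
        rw [hPQ, ← Matrix.map_mul, lderiv_map_ofPowerSeries]
    _ = P.map (fun q => polyToLaurent (derivative q)) * H.map φ
          + P.map polyToLaurent * (B.map φ * H.map φ) := by
        rw [Matrix.map_mul_derivation, PowerSeries.fundamentalSolution_derivative,
          Matrix.map_add _ (map_add φ), Matrix.map_mul, Matrix.map_mul, Matrix.map_mul, hP'Q, hPQ]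
    _ = A * (P.map polyToLaurent * H.map φ) := by
        rw [← mul_assoc, hB, Matrix.mul_inv_conj_sub_inv_mul (isUnit_det_map_polyToLaurent hP),
          sub_mul, mul_assoc]
        abel
end

section
/- Let $T: \mathbb{D} \to \mathrm{Mat}_N(\mathbb{C})$ be an analytic family of $N \times N$ matrices on a disk around $0$, with $T(\epsilon) = T_0 + \epsilon T_1 + O(\epsilon^2)$. Let $K = \ker T_0$ (right kernel) and $L = \ker T_0^t$ (left kernel), with $\dim K = \dim L = k$. If the bilinear form $L \times K \to \mathbb{C}$, $(\ell, v) \mapsto \ell^t T_1 v$, is nondegenerate, then $\det T(\epsilon)$ vanishes at $\epsilon = 0$ to order exactly $k$; equivalently $\mathrm{res}_{\epsilon=0}\, d\ln\det T(\epsilon) = k$. -/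
/-!
In a basis of `ℂᴺ` adapted to a splitting `ker T(0) ⊕ W`, the `k` columns of `T(ε)` coming
from `ker T(0)` vanish at `ε = 0`, hence are `ε` times analytic columns (their difference
slopes), so `det T(ε) = εᵏ u(ε)` where `u(0)` is the determinant of the vectors `T'(0) v`
(`v` running over a basis of `ker T(0)`) and `T(0) w` (`w` over a basis of `W`). These are
linearly independent: if `T'(0) v + T(0) w = 0`, pairing with the left kernel of `T(0)` kills
`T(0) w`, so `v = 0` by nondegeneracy, and then `w ∈ ker T(0) ∩ W = 0`.
-/

attribute [local instance] Matrix.normedAddCommGroup Matrix.normedSpace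

open scoped Topology
open Matrix
open Module

section LinearAlgebra

variable {R n ι κ μ : Type*} [CommRing R] [Fintype n]

theorem Matrix.det_fromCols_smul_left [Fintype κ] [Fintype μ] [DecidableEq κ] [DecidableEq μ]
    (c : R) (A : Matrix (κ ⊕ μ) κ R) (B : Matrix (κ ⊕ μ) μ R) :
    (fromCols (c • A) B).det = c ^ Fintype.card κ * (fromCols A B).det := by
  have hscale : fromCols (c • A) B =
      of fun i j => Sum.elim (fun _ => c) (fun _ => 1) j * fromCols A B i j := by
    ext i (a | b) <;> simp
  rw [hscale, det_mul_row, Fintype.prod_sum_type]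
  simp

theorem Matrix.det_eq_basis_det_mulVec [DecidableEq n] [Fintype ι] [DecidableEq ι]
    (M : Matrix n n R) (b : Basis ι R (n → R)) :
    M.det = b.det fun j => M *ᵥ b j := by
  rw [← LinearMap.det_toLin', ← mul_one (LinearMap.det _), ← b.det_self, ← b.det_comp]
  rfl

theorem Module.Basis.map_prodEquivOfIsCompl_apply {M : Type*} [AddCommGroup M] [Module R M]
    {p q : Submodule R M} (h : IsCompl p q) (bp : Basis κ R p) (bq : Basis μ R q) :
    ⇑((bp.prod bq).map (p.prodEquivOfIsCompl q h)) =
      Sum.elim (fun a => (bp a : M)) (fun c => (bq c : M)) := by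
  funext j
  cases j <;> simp

noncomputable def Module.Basis.mulVecToMatrix (b : Basis ι R (n → R)) (v : κ → n → R) :
    Matrix n n R →ₗ[R] Matrix ι κ R where
  toFun X := b.toMatrix fun a => X *ᵥ v a
  map_add' X Y := by ext; simp [Basis.toMatrix_apply, add_mulVec]
  map_smul' c X := by ext; simp [Basis.toMatrix_apply, smul_mulVec]

theorem Module.Basis.mulVecToMatrix_eq_zero (b : Basis ι R (n → R)) {v : κ → n → R}
    {X : Matrix n n R} (hX : ∀ a, X *ᵥ v a = 0) : b.mulVecToMatrix v X = 0 := by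
  ext i a
  simp [mulVecToMatrix, Basis.toMatrix_apply, hX a]

theorem Module.Basis.fromCols_mulVecToMatrix (b : Basis ι R (n → R)) (v : κ → n → R)
    (w : μ → n → R) (X Y : Matrix n n R) :
    fromCols (b.mulVecToMatrix v X) (b.mulVecToMatrix w Y) =
      b.toMatrix (Sum.elim (fun a => X *ᵥ v a) (fun c => Y *ᵥ w c)) := by
  ext i (a | c) <;> rfl

theorem Matrix.det_eq_det_fromCols_mulVecToMatrix [DecidableEq n] [Fintype κ] [Fintype μ]
    [DecidableEq κ] [DecidableEq μ] {b : Basis (κ ⊕ μ) R (n → R)} {v : κ → n → R}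
    {w : μ → n → R} (hb : ⇑b = Sum.elim v w) (M : Matrix n n R) :
    M.det = (fromCols (b.mulVecToMatrix v M) (b.mulVecToMatrix w M)).det := by
  rw [det_eq_basis_det_mulVec M b, Basis.det_apply, Basis.fromCols_mulVecToMatrix, hb]
  congr 2
  funext j
  cases j <;> rfl

theorem Module.Basis.isUnit_det_comp_of_injective {K V U : Type*} [Field K] [Fintype ι]
    [DecidableEq ι] [AddCommGroup V] [Module K V] [AddCommGroup U] [Module K U]
    (b : Basis ι K V) (e : Basis ι K U) {f : U →ₗ[K] V}
    (hf : Function.Injective f) : IsUnit (b.det (f ∘ e)) := by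
  have := Module.Finite.of_basis b
  have := Module.Finite.of_basis e
  have hdim : finrank K U = finrank K V := by
    rw [finrank_eq_card_basis b, finrank_eq_card_basis e]
  convert b.isUnit_det (e.map (f.linearEquivOfInjective hf hdim)) using 2
  funext i
  exact (e.map_apply (f.linearEquivOfInjective hf hdim) i).symm

theorem Matrix.injective_coprod_of_transversal (A B : Matrix n n R) {W : Submodule R (n → R)}
    (hW : Disjoint (LinearMap.ker A.mulVecLin) W)
    (hB : ∀ v ∈ LinearMap.ker A.mulVecLin,
      (∀ ℓ ∈ LinearMap.ker Aᵀ.mulVecLin, ℓ ⬝ᵥ B *ᵥ v = 0) → v = 0) :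
    Function.Injective ((B.mulVecLin ∘ₗ (LinearMap.ker A.mulVecLin).subtype).coprod
      (A.mulVecLin ∘ₗ W.subtype)) := by
  rw [← LinearMap.ker_eq_bot, LinearMap.ker_eq_bot']
  rintro ⟨v, w⟩ h
  replace h : B *ᵥ v + A *ᵥ w = 0 := by simpa using h
  have hv : (v : n → R) = 0 := hB v v.2 fun ℓ hℓ => by
    have hℓA : ℓ ᵥ* A = 0 := by simpa [mulVec_transpose] using hℓ
    calc ℓ ⬝ᵥ B *ᵥ v = ℓ ⬝ᵥ (B *ᵥ v + A *ᵥ w) := by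
          rw [dotProduct_add, dotProduct_mulVec ℓ A, hℓA, zero_dotProduct, add_zero]
      _ = 0 := by rw [h, dotProduct_zero]
  have hw : (w : n → R) = 0 :=
    Submodule.disjoint_def.1 hW w (by simpa [hv] using h) w.2
  exact Prod.ext (Subtype.ext hv) (Subtype.ext hw)

end LinearAlgebra

section Analytic

variable {𝕜 E F : Type*} [NontriviallyNormedField 𝕜] [NormedAddCommGroup E]
  [NormedSpace 𝕜 E] [NormedAddCommGroup F] [NormedSpace 𝕜 F] {z₀ : 𝕜}

theorem AnalyticAt.dslope {f : 𝕜 → E} (hf : AnalyticAt 𝕜 f z₀) :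
    AnalyticAt 𝕜 (dslope f z₀) z₀ :=
  let ⟨_, hp⟩ := hf
  ⟨_, hp.has_fpower_series_dslope_fslope⟩

theorem AnalyticAt.linearMap_comp [CompleteSpace 𝕜] [FiniteDimensional 𝕜 E] {f : 𝕜 → E}
    (L : E →ₗ[𝕜] F) (hf : AnalyticAt 𝕜 f z₀) :
    AnalyticAt 𝕜 (fun z => L (f z)) z₀ :=
  (L.toContinuousLinearMap.analyticAt _).comp hf

theorem LinearMap.deriv_comp [CompleteSpace 𝕜] [FiniteDimensional 𝕜 E] {f : 𝕜 → E}
    (L : E →ₗ[𝕜] F) (hf : DifferentiableAt 𝕜 f z₀) :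
    deriv (fun z => L (f z)) z₀ = L (deriv f z₀) :=
  (L.toContinuousLinearMap.hasFDerivAt.comp_hasDerivAt z₀ hf.hasDerivAt).deriv

variable {m n κ μ : Type*} [Fintype m] [Fintype n] [Fintype κ] [Fintype μ]

theorem analyticAt_matrix_iff {M : 𝕜 → Matrix m n 𝕜} :
    AnalyticAt 𝕜 M z₀ ↔ ∀ i j, AnalyticAt 𝕜 (fun z => M z i j) z₀ := by
  simp only [← analyticAt_pi_iff]
  rfl

theorem AnalyticAt.matrix_det [DecidableEq n] {M : 𝕜 → Matrix n n 𝕜}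
    (hM : AnalyticAt 𝕜 M z₀) :
    AnalyticAt 𝕜 (fun z => (M z).det) z₀ := by
  simp only [det_apply']
  exact Finset.analyticAt_fun_sum _ fun σ _ =>
    analyticAt_const.mul <|
      Finset.analyticAt_fun_prod _ fun i _ => analyticAt_matrix_iff.1 hM (σ i) i

theorem AnalyticAt.matrix_fromCols {A : 𝕜 → Matrix m κ 𝕜} {B : 𝕜 → Matrix m μ 𝕜}
    (hA : AnalyticAt 𝕜 A z₀) (hB : AnalyticAt 𝕜 B z₀) :
    AnalyticAt 𝕜 (fun z => fromCols (A z) (B z)) z₀ :=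
  analyticAt_matrix_iff.2 fun i =>
    Sum.rec (analyticAt_matrix_iff.1 hA i) (analyticAt_matrix_iff.1 hB i)

theorem exists_analyticAt_det_fromCols_eq_pow_mul [DecidableEq κ] [DecidableEq μ]
    {A : 𝕜 → Matrix (κ ⊕ μ) κ 𝕜} {B : 𝕜 → Matrix (κ ⊕ μ) μ 𝕜}
    (hA : AnalyticAt 𝕜 A z₀) (hB : AnalyticAt 𝕜 B z₀) (hA₀ : A z₀ = 0) :
    ∃ u : 𝕜 → 𝕜, AnalyticAt 𝕜 u z₀ ∧
      u z₀ = (fromCols (deriv A z₀) (B z₀)).det ∧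
      ∀ z, (fromCols (A z) (B z)).det = (z - z₀) ^ Fintype.card κ * u z := by
  refine ⟨fun z => (fromCols (dslope A z₀ z) (B z)).det,
    (hA.dslope.matrix_fromCols hB).matrix_det,
    congrArg (fun X => (fromCols X (B z₀)).det) (dslope_same A z₀), fun z => ?_⟩
  rw [← det_fromCols_smul_left, sub_smul_dslope, hA₀, sub_zero]

end Analytic

theorem det_order_of_transversal_family_general {N k : ℕ}
    (T : ℂ → Matrix (Fin N) (Fin N) ℂ)
    (hT : AnalyticAt ℂ T 0)
    (hK : Module.finrank ℂ (LinearMap.ker (Matrix.mulVecLin (T 0))) = k)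
    (hnondegK : ∀ v ∈ LinearMap.ker (Matrix.mulVecLin (T 0)),
      (∀ ℓ ∈ LinearMap.ker (Matrix.mulVecLin (Matrix.transpose (T 0))),
        dotProduct ℓ (Matrix.mulVec (deriv T 0) v) = 0) → v = 0) :
    ∃ u : ℂ → ℂ, AnalyticAt ℂ u 0 ∧ u 0 ≠ 0 ∧
      ∀ᶠ ε in 𝓝 (0 : ℂ), (T ε).det = ε ^ k * u ε := by
  set K := LinearMap.ker (T 0).mulVecLin
  obtain ⟨W, hW⟩ := K.exists_isCompl
  let bK : Basis (Fin k) ℂ K := finBasisOfFinrankEq ℂ K hK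
  let bW := finBasis ℂ W
  let b := (bK.prod bW).map (K.prodEquivOfIsCompl W hW)
  have hb : ⇑b = Sum.elim (fun a => (bK a : Fin N → ℂ)) (fun c => (bW c : Fin N → ℂ)) :=
    Basis.map_prodEquivOfIsCompl_apply hW bK bW
  let A := b.mulVecToMatrix fun a => (bK a : Fin N → ℂ)
  let B := b.mulVecToMatrix fun c => (bW c : Fin N → ℂ)
  have hA₀ : A (T 0) = 0 := b.mulVecToMatrix_eq_zero fun a => LinearMap.mem_ker.1 (bK a).2
  obtain ⟨u, hu, hu₀, hfac⟩ := exists_analyticAt_det_fromCols_eq_pow_mul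
    (hT.linearMap_comp A) (hT.linearMap_comp B) hA₀
  refine ⟨u, hu, ?_, .of_forall fun z => ?_⟩
  · -- `rw` cannot use `LinearMap.deriv_comp` directly: the two sides reach the `Module` structure
    -- on matrices through different instance paths.
    rw [hu₀, show deriv (fun z => A (T z)) 0 = A (deriv T 0) from
      A.deriv_comp hT.differentiableAt, b.fromCols_mulVecToMatrix, ← Basis.det_apply]
    convert (b.isUnit_det_comp_of_injective (bK.prod bW)
      ((T 0).injective_coprod_of_transversal (deriv T 0) hW.disjoint hnondegK)).ne_zero
    funext j
    cases j <;> simp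
  · rw [det_eq_det_fromCols_mulVecToMatrix hb (T z)]
    simpa using hfac z

/-- Transversality criterion: for an analytic family `T(ε)` of `N × N`
matrices, if the right kernel `K` of `T(0)` and the left kernel `L` of `T(0)`
both have dimension `k` and the bilinear form `(ℓ, v) ↦ ℓᵗ T'(0) v` on `L × K`
is nondegenerate, then `det T(ε)` vanishes to order exactly `k` at `ε = 0`. -/
theorem det_order_of_transversal_family {N k : ℕ}
    (T : ℂ → Matrix (Fin N) (Fin N) ℂ)
    (hT : AnalyticAt ℂ T 0)
    (hK : Module.finrank ℂ (LinearMap.ker (Matrix.mulVecLin (T 0))) = k)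
    (hL : Module.finrank ℂ (LinearMap.ker (Matrix.mulVecLin (Matrix.transpose (T 0)))) = k)
    (hnondegL : ∀ ℓ ∈ LinearMap.ker (Matrix.mulVecLin (Matrix.transpose (T 0))),
      (∀ v ∈ LinearMap.ker (Matrix.mulVecLin (T 0)),
        dotProduct ℓ (Matrix.mulVec (deriv T 0) v) = 0) → ℓ = 0)
    (hnondegK : ∀ v ∈ LinearMap.ker (Matrix.mulVecLin (T 0)),
      (∀ ℓ ∈ LinearMap.ker (Matrix.mulVecLin (Matrix.transpose (T 0))),
        dotProduct ℓ (Matrix.mulVec (deriv T 0) v) = 0) → v = 0) :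
    ∃ u : ℂ → ℂ, AnalyticAt ℂ u 0 ∧ u 0 ≠ 0 ∧
      ∀ᶠ ε in 𝓝 (0 : ℂ), (T ε).det = ε ^ k * u ε :=
  det_order_of_transversal_family_general T hT hK hnondegK
end

section
/- Let $J_1, \dots, J_m \in \mathrm{GL}_n$-valued smooth maps on a smooth manifold with $J_1 J_2 \cdots J_m = \mathbf{1}$ identically. Define the 2-form $\Omega := \sum_{\ell=1}^m \mathrm{tr}\left(K_\ell^{-1} dK_\ell \wedge J_\ell^{-1} dJ_\ell\right)$ where $K_\ell := J_1 \cdots J_\ell$. Then $\Omega$ is invariant under the cyclic shift $(J_1, \dots, J_m) \mapsto (J_2, \dots, J_m, J_1)$. -/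
attribute [local instance] Matrix.normedAddCommGroup Matrix.normedSpace

/-- The ordered partial product `K_ℓ = J₁ ⋯ J_ℓ` (indices `0,…,ℓ`). -/
noncomputable def partialProd {m n : ℕ} {M : Type*}
    (J : Fin m → M → Matrix (Fin n) (Fin n) ℂ) (ℓ : Fin m) (x : M) :
    Matrix (Fin n) (Fin n) ℂ :=
  (((List.finRange m).take (ℓ.val + 1)).map fun i => J i x).prod

/-- The 2-form `Ω = ∑_ℓ tr(K_ℓ⁻¹ dK_ℓ ∧ J_ℓ⁻¹ dJ_ℓ)` evaluated on a pair of
tangent vectors `u, v` at `x`. -/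
noncomputable def OmegaForm {m n : ℕ} {M : Type*} [NormedAddCommGroup M]
    [NormedSpace ℝ M]
    (J : Fin m → M → Matrix (Fin n) (Fin n) ℂ) (x u v : M) : ℂ :=
  ∑ ℓ : Fin m,
    (Matrix.trace ((partialProd J ℓ x)⁻¹ * fderiv ℝ (partialProd J ℓ) x u
        * ((J ℓ x)⁻¹ * fderiv ℝ (J ℓ) x v))
      - Matrix.trace ((partialProd J ℓ x)⁻¹ * fderiv ℝ (partialProd J ℓ) x v
        * ((J ℓ x)⁻¹ * fderiv ℝ (J ℓ) x u)))

section AuxCLM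

variable {n : ℕ} {M : Type*} [NormedAddCommGroup M] [NormedSpace ℝ M]

local notation "Mat" => Matrix (Fin n) (Fin n) ℂ

noncomputable def matMulL (n : ℕ) :
    Matrix (Fin n) (Fin n) ℂ →ₗ[ℝ] (Matrix (Fin n) (Fin n) ℂ →L[ℝ] Matrix (Fin n) (Fin n) ℂ) where
  toFun A := LinearMap.toContinuousLinearMap (LinearMap.mulLeft ℝ A)
  map_add' A B := by ext C; simp [Matrix.add_mul]
  map_smul' c A := by ext C; simp [Matrix.smul_mul]

noncomputable def matMulCLM (n : ℕ) :
    Matrix (Fin n) (Fin n) ℂ →L[ℝ] Matrix (Fin n) (Fin n) ℂ →L[ℝ] Matrix (Fin n) (Fin n) ℂ :=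
  LinearMap.toContinuousLinearMap (matMulL n)

@[simp] lemma matMulCLM_apply (A B : Mat) : matMulCLM n A B = A * B := rfl

theorem HasFDerivAt.matmul {f g : M → Mat} {f' g' : M →L[ℝ] Mat} {x : M}
    (hf : HasFDerivAt f f' x) (hg : HasFDerivAt g g' x) :
    HasFDerivAt (fun y => f y * g y)
      ((show M →L[ℝ] Mat from ((matMulCLM n).flip (g x)).comp f') + ((matMulCLM n) (f x)).comp g') x := by
  have h := ((matMulCLM n).isBoundedBilinearMap).hasFDerivAt (f x, g x)
  have h2 := HasFDerivAt.comp x h (HasFDerivAt.prodMk hf hg)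
  refine h2.congr_fderiv ?_
  ext w : 1
  simp [IsBoundedBilinearMap.deriv_apply, add_comm]
  exact add_comm _ _

theorem DifferentiableAt.matmul {f g : M → Mat} {x : M}
    (hf : DifferentiableAt ℝ f x) (hg : DifferentiableAt ℝ g x) :
    DifferentiableAt ℝ (fun y => f y * g y) x :=
  (HasFDerivAt.matmul hf.hasFDerivAt hg.hasFDerivAt).differentiableAt

theorem fderiv_matmul {f g : M → Mat} {x : M}
    (hf : DifferentiableAt ℝ f x) (hg : DifferentiableAt ℝ g x) (w : M) :
    fderiv ℝ (fun y => f y * g y) x w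
      = fderiv ℝ f x w * g x + f x * fderiv ℝ g x w := by
  rw [(HasFDerivAt.matmul hf.hasFDerivAt hg.hasFDerivAt).fderiv]
  rfl

end AuxCLM

section AuxList

variable {m n : ℕ} {M : Type*} [NormedAddCommGroup M] [NormedSpace ℝ M]

lemma differentiable_listProd (J : Fin m → M → Matrix (Fin n) (Fin n) ℂ)
    (h : ∀ i, Differentiable ℝ (J i)) (L : List (Fin m)) :
    Differentiable ℝ (fun x => (L.map fun i => J i x).prod) := by
  induction L with
  | nil => simpa using differentiable_const (1 : Matrix (Fin n) (Fin n) ℂ)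
  | cons i L ih =>
      simp only [List.map_cons, List.prod_cons]
      exact fun x => (h i x).matmul (ih x)

omit [NormedAddCommGroup M] [NormedSpace ℝ M] in
lemma isUnit_det_listProd (L : List (Matrix (Fin n) (Fin n) ℂ))
    (h : ∀ A ∈ L, IsUnit A.det) : IsUnit L.prod.det := by
  induction L with
  | nil => simp
  | cons A L ih =>
      rw [List.prod_cons, Matrix.det_mul]
      exact (h A (by simp)).mul (ih fun B hB => h B (by simp [hB]))

omit [NormedAddCommGroup M] [NormedSpace ℝ M] in
lemma partialProd_zero (J : Fin m → M → Matrix (Fin n) (Fin n) ℂ) (h : 0 < m) (x : M) :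
    partialProd J ⟨0, h⟩ x = J ⟨0, h⟩ x := by
  unfold partialProd
  rw [List.take_succ]
  simp only [List.take_zero, List.nil_append]
  rw [List.getElem?_eq_getElem (by simpa using h)]
  simp [List.getElem_finRange]

omit [NormedAddCommGroup M] [NormedSpace ℝ M] in
lemma partialProd_succ (J : Fin m → M → Matrix (Fin n) (Fin n) ℂ) (t : ℕ) (h : t + 1 < m)
    (x : M) :
    partialProd J ⟨t + 1, h⟩ x
      = partialProd J ⟨t, Nat.lt_of_succ_lt h⟩ x * J ⟨t + 1, h⟩ x := by
  unfold partialProd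
  rw [List.take_succ, List.getElem?_eq_getElem (by simpa using h)]
  simp [List.getElem_finRange]

omit [NormedAddCommGroup M] [NormedSpace ℝ M] in
lemma partialProd_last (J : Fin m → M → Matrix (Fin n) (Fin n) ℂ) (h : 0 < m) (x : M) :
    partialProd J ⟨m - 1, by omega⟩ x
      = (((List.finRange m)).map fun i => J i x).prod := by
  unfold partialProd
  rw [Nat.sub_add_cancel h, List.take_of_length_le (by simp)]

end AuxList

section AuxAlg

variable {n : ℕ}

local notation "Mat" => Matrix (Fin n) (Fin n) ℂ

lemma inv_mul_shift (j0 k k' a a' p0 : Mat) (hj0 : IsUnit j0.det)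
    (hk' : j0 * k' = k) (ha' : p0 * k' + j0 * a' = a) :
    k'⁻¹ * a' = k⁻¹ * a - k⁻¹ * (p0 * (j0⁻¹ * k)) := by
  have hk'' : k' = j0⁻¹ * k := by
    rw [← hk', ← mul_assoc, Matrix.nonsing_inv_mul _ hj0, one_mul]
  have h2 : j0 * a' = a - p0 * k' := by rw [← ha']; abel
  have ha'' : a' = j0⁻¹ * a - j0⁻¹ * (p0 * k') := by
    calc a' = j0⁻¹ * (j0 * a') := by
              rw [← mul_assoc, Matrix.nonsing_inv_mul _ hj0, one_mul]
    _ = j0⁻¹ * (a - p0 * k') := by rw [h2]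
    _ = j0⁻¹ * a - j0⁻¹ * (p0 * k') := by rw [mul_sub]
  have hki : k'⁻¹ = k⁻¹ * j0 := by
    rw [hk'', Matrix.mul_inv_rev, Matrix.nonsing_inv_nonsing_inv _ hj0]
  have canc : ∀ X : Mat, k⁻¹ * j0 * (j0⁻¹ * X) = k⁻¹ * X := fun X => by
    rw [mul_assoc, ← mul_assoc j0, Matrix.mul_nonsing_inv _ hj0, one_mul]
  rw [hki, ha'', mul_sub, canc, canc, hk'']

lemma tele_step (kp k j q bp b : Mat) (hj : IsUnit j.det)
    (hk : k = kp * j) (hb : b = bp * j + kp * q) :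
    k * (j⁻¹ * (q * k⁻¹)) = b * k⁻¹ - bp * kp⁻¹ := by
  have h1 : k * j⁻¹ = kp := by rw [hk, mul_assoc, Matrix.mul_nonsing_inv _ hj, mul_one]
  have h2 : j * k⁻¹ = kp⁻¹ := by
    rw [hk, Matrix.mul_inv_rev, ← mul_assoc, Matrix.mul_nonsing_inv _ hj, one_mul]
  have h3 : kp * q = b - bp * j := by rw [hb]; abel
  calc k * (j⁻¹ * (q * k⁻¹)) = (k * j⁻¹) * q * k⁻¹ := by
        rw [mul_assoc, mul_assoc]
  _ = (b - bp * j) * k⁻¹ := by rw [h1, h3]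
  _ = b * k⁻¹ - bp * (j * k⁻¹) := by rw [sub_mul, mul_assoc]
  _ = b * k⁻¹ - bp * kp⁻¹ := by rw [h2]

lemma trace_comm4 (A B C D : Mat) :
    Matrix.trace (A * (B * (C * D))) = Matrix.trace (C * (D * (A * B))) := by
  rw [show A * (B * (C * D)) = (A * B) * (C * D) by rw [mul_assoc],
    Matrix.trace_mul_comm, mul_assoc]

/-- The master per-term identity for the cyclic shift. -/
lemma term_shift (j0 p0 q0 kp ap bp k a b j p q k' a' b' j' p' q' : Mat)
    (hj0 : IsUnit j0.det) (hj : IsUnit j.det)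
    (hk' : j0 * k' = k) (ha' : p0 * k' + j0 * a' = a) (hb' : q0 * k' + j0 * b' = b)
    (hj' : j' = j) (hp' : p' = p) (hq' : q' = q)
    (hk : k = kp * j) (ha : a = ap * j + kp * p) (hb : b = bp * j + kp * q) :
    Matrix.trace (k'⁻¹ * a' * (j'⁻¹ * q')) - Matrix.trace (k'⁻¹ * b' * (j'⁻¹ * p'))
      = (Matrix.trace (k⁻¹ * a * (j⁻¹ * q)) - Matrix.trace (k⁻¹ * b * (j⁻¹ * p)))
        - ((Matrix.trace (p0 * (j0⁻¹ * (b * k⁻¹))) - Matrix.trace (q0 * (j0⁻¹ * (a * k⁻¹))))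
           - (Matrix.trace (p0 * (j0⁻¹ * (bp * kp⁻¹)))
              - Matrix.trace (q0 * (j0⁻¹ * (ap * kp⁻¹))))) := by
  rw [hj', hp', hq']
  have e1 : k'⁻¹ * a' = k⁻¹ * a - k⁻¹ * (p0 * (j0⁻¹ * k)) :=
    inv_mul_shift j0 k k' a a' p0 hj0 hk' ha'
  have e2 : k'⁻¹ * b' = k⁻¹ * b - k⁻¹ * (q0 * (j0⁻¹ * k)) :=
    inv_mul_shift j0 k k' b b' q0 hj0 hk' hb'
  have tv : k * (j⁻¹ * (q * k⁻¹)) = b * k⁻¹ - bp * kp⁻¹ :=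
    tele_step kp k j q bp b hj hk hb
  have tu : k * (j⁻¹ * (p * k⁻¹)) = a * k⁻¹ - ap * kp⁻¹ :=
    tele_step kp k j p ap a hj hk ha
  have eX : Matrix.trace (k⁻¹ * (p0 * (j0⁻¹ * k)) * (j⁻¹ * q))
      = Matrix.trace (p0 * (j0⁻¹ * (b * k⁻¹))) - Matrix.trace (p0 * (j0⁻¹ * (bp * kp⁻¹))) := by
    rw [Matrix.trace_mul_comm]
    have : j⁻¹ * q * (k⁻¹ * (p0 * (j0⁻¹ * k)))
        = j⁻¹ * (q * (k⁻¹ * (p0 * (j0⁻¹ * k)))) := by rw [mul_assoc]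
    rw [this, Matrix.trace_mul_comm]
    have : q * (k⁻¹ * (p0 * (j0⁻¹ * k))) * j⁻¹
        = q * k⁻¹ * (p0 * (j0⁻¹ * (k * j⁻¹))) := by
      simp only [mul_assoc]
    rw [this, Matrix.trace_mul_comm]
    have : p0 * (j0⁻¹ * (k * j⁻¹)) * (q * k⁻¹)
        = p0 * (j0⁻¹ * (k * (j⁻¹ * (q * k⁻¹)))) := by simp only [mul_assoc]
    rw [this, tv, mul_sub, mul_sub, Matrix.trace_sub]
  have eY : Matrix.trace (k⁻¹ * (q0 * (j0⁻¹ * k)) * (j⁻¹ * p))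
      = Matrix.trace (q0 * (j0⁻¹ * (a * k⁻¹))) - Matrix.trace (q0 * (j0⁻¹ * (ap * kp⁻¹))) := by
    rw [Matrix.trace_mul_comm]
    have : j⁻¹ * p * (k⁻¹ * (q0 * (j0⁻¹ * k)))
        = j⁻¹ * (p * (k⁻¹ * (q0 * (j0⁻¹ * k)))) := by rw [mul_assoc]
    rw [this, Matrix.trace_mul_comm]
    have : p * (k⁻¹ * (q0 * (j0⁻¹ * k))) * j⁻¹
        = p * k⁻¹ * (q0 * (j0⁻¹ * (k * j⁻¹))) := by
      simp only [mul_assoc]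
    rw [this, Matrix.trace_mul_comm]
    have : q0 * (j0⁻¹ * (k * j⁻¹)) * (p * k⁻¹)
        = q0 * (j0⁻¹ * (k * (j⁻¹ * (p * k⁻¹)))) := by simp only [mul_assoc]
    rw [this, tu, mul_sub, mul_sub, Matrix.trace_sub]
  rw [e1, e2, sub_mul, sub_mul, Matrix.trace_sub, Matrix.trace_sub, eX, eY]
  ring

end AuxAlg
open Fin.NatCast
/-- Cyclic invariance of the graph two-form `Ω` under the shift
`(J₁,…,J_m) ↦ (J₂,…,J_m,J₁)`, given the no-monodromy condition
`J₁ ⋯ J_m = 1`. -/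
theorem OmegaForm_cyclic_invariant {m n : ℕ} [NeZero m] {M : Type*}
    [NormedAddCommGroup M] [NormedSpace ℝ M]
    (J : Fin m → M → Matrix (Fin n) (Fin n) ℂ)
    (hsmooth : ∀ ℓ, ContDiff ℝ (⊤ : ℕ∞) (J ℓ))
    (hinv : ∀ ℓ x, IsUnit (J ℓ x).det)
    (hprod : ∀ x, (((List.finRange m)).map fun i => J i x).prod = 1) :
    ∀ x u v : M,
      OmegaForm J x u v = OmegaForm (fun i => J (i + 1)) x u v := by
  intro x u v
  by_cases hm1 : m = 1
  · subst hm1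
    have hfix : (fun i : Fin 1 => J (i + 1)) = J :=
      funext fun i => by rw [Subsingleton.elim (i + 1) i]
    rw [hfix]
  have hm : 0 < m := Nat.pos_of_ne_zero (NeZero.ne m)
  obtain ⟨m', rfl⟩ : ∃ m'', m = m'' + 2 := ⟨m - 2, by omega⟩
  clear hm hm1
  set Jc : Fin (m' + 2) → M → Matrix (Fin n) (Fin n) ℂ := fun i => J (i + 1) with hJc
  have hdJ : ∀ i, Differentiable ℝ (J i) := fun i => (hsmooth i).differentiable (by simp)
  have hdJc : ∀ i, Differentiable ℝ (Jc i) := fun i => hdJ _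
  have hdK : ∀ ℓ, Differentiable ℝ (partialProd J ℓ) := fun ℓ =>
    differentiable_listProd J hdJ _
  have hdKc : ∀ ℓ, Differentiable ℝ (partialProd Jc ℓ) := fun ℓ =>
    differentiable_listProd Jc hdJc _
  have hcast : ∀ (t : ℕ) (h : t < m' + 2), ((t : ℕ) : Fin (m' + 2)) = ⟨t, h⟩ :=
    fun t h => Fin.ext (by simp [Fin.val_cast_of_lt h])
  have haddone : ∀ (t : ℕ) (h : t + 1 < m' + 2),
      (⟨t, Nat.lt_of_succ_lt h⟩ : Fin (m' + 2)) + 1 = ⟨t + 1, h⟩ := by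
    intro t h
    apply Fin.ext
    simp [Fin.add_def]
    omega
  have hJcEq : ∀ (t : ℕ) (h : t + 1 < m' + 2),
      Jc ⟨t, Nat.lt_of_succ_lt h⟩ = J ⟨t + 1, h⟩ := fun t h => by
    rw [show Jc ⟨t, Nat.lt_of_succ_lt h⟩ = J (⟨t, Nat.lt_of_succ_lt h⟩ + 1) from rfl,
      haddone t h]
  have h0mk : (0 : Fin (m' + 2)) = ⟨0, by omega⟩ := Fin.ext (by simp)
  have claimA : ∀ (t : ℕ) (h : t + 1 < m' + 2) (y : M),
      J 0 y * partialProd Jc ⟨t, Nat.lt_of_succ_lt h⟩ y = partialProd J ⟨t + 1, h⟩ y := by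
    intro t
    induction t with
    | zero =>
        intro h y
        rw [partialProd_zero Jc (by omega), partialProd_succ J 0 h,
          partialProd_zero J (by omega), hJcEq 0 h, ← h0mk]
    | succ t ih =>
        intro h y
        have ht1 : t + 1 < m' + 2 := Nat.lt_of_succ_lt h
        rw [partialProd_succ Jc t ht1, ← mul_assoc, ih ht1, hJcEq (t + 1) h,
          ← partialProd_succ J (t + 1) h]
  have hKlast : partialProd J ⟨m' + 1, by omega⟩ = fun _ : M => (1 : Matrix (Fin n) (Fin n) ℂ) := by
    funext y
    exact (partialProd_last J (by omega) y).trans (hprod y)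
  have claimB : partialProd Jc ⟨m' + 1, by omega⟩
      = fun _ : M => (1 : Matrix (Fin n) (Fin n) ℂ) := by
    funext y
    have h1 : J 0 y * partialProd Jc ⟨m', by omega⟩ y = partialProd J ⟨m' + 1, by omega⟩ y :=
      claimA m' (by omega) y
    have h2 : partialProd J ⟨m' + 1, by omega⟩ y = 1 := by rw [hKlast]
    have h4 : partialProd Jc ⟨m', by omega⟩ y = (J 0 y)⁻¹ :=
      (Matrix.inv_eq_right_inv (h1.trans h2)).symm
    have h6 : (⟨m' + 1, by omega⟩ : Fin (m' + 2)) + 1 = 0 := by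
      apply Fin.ext
      simp [Fin.add_def]
    have h5 : Jc ⟨m' + 1, by omega⟩ = J 0 := by
      rw [show Jc ⟨m' + 1, by omega⟩ = J ((⟨m' + 1, by omega⟩ : Fin (m' + 2)) + 1) from rfl, h6]
    rw [partialProd_succ Jc m' (by omega), h4, h5]
    exact Matrix.nonsing_inv_mul _ (hinv 0 y)
  have hpp0 : partialProd J (0 : Fin (m' + 2)) = J 0 := by
    funext y
    rw [h0mk, partialProd_zero J (by omega), ← h0mk]
  set T : ℕ → ℂ := fun t =>
    Matrix.trace ((partialProd J (t : Fin (m' + 2)) x)⁻¹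
        * fderiv ℝ (partialProd J (t : Fin (m' + 2))) x u
        * ((J (t : Fin (m' + 2)) x)⁻¹ * fderiv ℝ (J (t : Fin (m' + 2))) x v))
      - Matrix.trace ((partialProd J (t : Fin (m' + 2)) x)⁻¹
        * fderiv ℝ (partialProd J (t : Fin (m' + 2))) x v
        * ((J (t : Fin (m' + 2)) x)⁻¹ * fderiv ℝ (J (t : Fin (m' + 2))) x u)) with hT
  set T' : ℕ → ℂ := fun t =>
    Matrix.trace ((partialProd Jc (t : Fin (m' + 2)) x)⁻¹
        * fderiv ℝ (partialProd Jc (t : Fin (m' + 2))) x u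
        * ((Jc (t : Fin (m' + 2)) x)⁻¹ * fderiv ℝ (Jc (t : Fin (m' + 2))) x v))
      - Matrix.trace ((partialProd Jc (t : Fin (m' + 2)) x)⁻¹
        * fderiv ℝ (partialProd Jc (t : Fin (m' + 2))) x v
        * ((Jc (t : Fin (m' + 2)) x)⁻¹ * fderiv ℝ (Jc (t : Fin (m' + 2))) x u)) with hT'
  set F : ℕ → ℂ := fun t =>
    Matrix.trace (fderiv ℝ (J 0) x u * ((J 0 x)⁻¹
        * (fderiv ℝ (partialProd J (t : Fin (m' + 2))) x v
            * (partialProd J (t : Fin (m' + 2)) x)⁻¹)))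
      - Matrix.trace (fderiv ℝ (J 0) x v * ((J 0 x)⁻¹
        * (fderiv ℝ (partialProd J (t : Fin (m' + 2))) x u
            * (partialProd J (t : Fin (m' + 2)) x)⁻¹))) with hF
  have hΩ : OmegaForm J x u v = ∑ t ∈ Finset.range (m' + 2), T t := by
    simp only [OmegaForm]
    rw [← Fin.sum_univ_eq_sum_range T (m' + 2)]
    exact Finset.sum_congr rfl fun ℓ _ => by
      simp only [hT, Fin.cast_val_eq_self]
  have hΩ' : OmegaForm Jc x u v = ∑ t ∈ Finset.range (m' + 2), T' t := by
    simp only [OmegaForm]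
    rw [← Fin.sum_univ_eq_sum_range T' (m' + 2)]
    exact Finset.sum_congr rfl fun ℓ _ => by
      simp only [hT', Fin.cast_val_eq_self]
  have keyterm : ∀ t : ℕ, t + 1 < m' + 2 → T' t = T (t + 1) - (F (t + 1) - F t) := by
    intro t h
    have ht : t < m' + 2 := Nat.lt_of_succ_lt h
    have hAfun : (fun y => J 0 y * partialProd Jc ⟨t, ht⟩ y) = partialProd J ⟨t + 1, h⟩ :=
      funext (claimA t h)
    have hderivu : fderiv ℝ (partialProd J ⟨t + 1, h⟩) x u
        = fderiv ℝ (J 0) x u * partialProd Jc ⟨t, ht⟩ x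
          + J 0 x * fderiv ℝ (partialProd Jc ⟨t, ht⟩) x u := by
      conv_lhs => rw [← hAfun]
      exact fderiv_matmul (hdJ 0 x) (hdKc ⟨t, ht⟩ x) u
    have hderivv : fderiv ℝ (partialProd J ⟨t + 1, h⟩) x v
        = fderiv ℝ (J 0) x v * partialProd Jc ⟨t, ht⟩ x
          + J 0 x * fderiv ℝ (partialProd Jc ⟨t, ht⟩) x v := by
      conv_lhs => rw [← hAfun]
      exact fderiv_matmul (hdJ 0 x) (hdKc ⟨t, ht⟩ x) v
    have hSfun : (fun y => partialProd J ⟨t, ht⟩ y * J ⟨t + 1, h⟩ y)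
        = partialProd J ⟨t + 1, h⟩ := funext fun y => (partialProd_succ J t h y).symm
    have hkx : partialProd J ⟨t + 1, h⟩ x = partialProd J ⟨t, ht⟩ x * J ⟨t + 1, h⟩ x :=
      partialProd_succ J t h x
    have hderivKu : fderiv ℝ (partialProd J ⟨t + 1, h⟩) x u
        = fderiv ℝ (partialProd J ⟨t, ht⟩) x u * J ⟨t + 1, h⟩ x
          + partialProd J ⟨t, ht⟩ x * fderiv ℝ (J ⟨t + 1, h⟩) x u := by
      conv_lhs => rw [← hSfun]
      exact fderiv_matmul (hdK ⟨t, ht⟩ x) (hdJ ⟨t + 1, h⟩ x) u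
    have hderivKv : fderiv ℝ (partialProd J ⟨t + 1, h⟩) x v
        = fderiv ℝ (partialProd J ⟨t, ht⟩) x v * J ⟨t + 1, h⟩ x
          + partialProd J ⟨t, ht⟩ x * fderiv ℝ (J ⟨t + 1, h⟩) x v := by
      conv_lhs => rw [← hSfun]
      exact fderiv_matmul (hdK ⟨t, ht⟩ x) (hdJ ⟨t + 1, h⟩ x) v
    simp only [hT, hT', hF, hcast t ht, hcast (t + 1) h]
    exact term_shift (J 0 x) (fderiv ℝ (J 0) x u) (fderiv ℝ (J 0) x v)
      (partialProd J ⟨t, ht⟩ x) (fderiv ℝ (partialProd J ⟨t, ht⟩) x u)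
      (fderiv ℝ (partialProd J ⟨t, ht⟩) x v)
      (partialProd J ⟨t + 1, h⟩ x) (fderiv ℝ (partialProd J ⟨t + 1, h⟩) x u)
      (fderiv ℝ (partialProd J ⟨t + 1, h⟩) x v)
      (J ⟨t + 1, h⟩ x) (fderiv ℝ (J ⟨t + 1, h⟩) x u) (fderiv ℝ (J ⟨t + 1, h⟩) x v)
      (partialProd Jc ⟨t, ht⟩ x) (fderiv ℝ (partialProd Jc ⟨t, ht⟩) x u)
      (fderiv ℝ (partialProd Jc ⟨t, ht⟩) x v)
      (Jc ⟨t, ht⟩ x) (fderiv ℝ (Jc ⟨t, ht⟩) x u) (fderiv ℝ (Jc ⟨t, ht⟩) x v)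
      (hinv 0 x) (hinv ⟨t + 1, h⟩ x) (claimA t h x) hderivu.symm hderivv.symm
      (by rw [hJcEq t h]) (by rw [hJcEq t h]) (by rw [hJcEq t h])
      hkx hderivKu hderivKv
  have hT0 : T 0 = 0 := by
    simp only [hT, Nat.cast_zero, hpp0]
    rw [Matrix.trace_mul_comm ((J 0 x)⁻¹ * fderiv ℝ (J 0) x u)
      ((J 0 x)⁻¹ * fderiv ℝ (J 0) x v)]
    exact sub_self _
  have hT'last : T' (m' + 1) = 0 := by
    simp only [hT', hcast (m' + 1) (by omega), claimB]
    simp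
  have hF0 : F 0 = 0 := by
    simp only [hF, Nat.cast_zero, hpp0]
    rw [trace_comm4 (fderiv ℝ (J 0) x u) (J 0 x)⁻¹ (fderiv ℝ (J 0) x v) (J 0 x)⁻¹]
    exact sub_self _
  have hFlast : F (m' + 1) = 0 := by
    simp only [hF, hcast (m' + 1) (by omega), hKlast]
    simp
  rw [hΩ, hΩ', Finset.sum_range_succ' T (m' + 1), Finset.sum_range_succ T' (m' + 1),
    hT0, hT'last, add_zero, add_zero]
  rw [Finset.sum_congr rfl fun t htm =>
    keyterm t (by have := Finset.mem_range.mp htm; omega)]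
  rw [show (∑ t ∈ Finset.range (m' + 1), (T (t + 1) - (F (t + 1) - F t)))
      = (∑ t ∈ Finset.range (m' + 1), T (t + 1))
        - ∑ t ∈ Finset.range (m' + 1), (F (t + 1) - F t) from Finset.sum_sub_distrib _ _,
    Finset.sum_range_sub F (m' + 1), hFlast, hF0]
  ring
end
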